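/- arXiv:1604.00220 — 6 statements merged into one kernel-verified Lean document; each statement's English description precedes it below -/
import Mathlib

section
/- Let t(n,x) be a solution of the semi-discrete chain t_{1,x} = t_x + e^{(t+t_1)/2} (the Adler–Startsev chain). Then the function F = e^{(t_1 − t)/2} + e^{(t_1 − t_2)/2} is an x-integral: d/dx [ e^{(t_1−t)/2} + e^{(t_1−t_2)/2} ] = 0 along solutions. -/
/-! Along the chain, `(t₁ - t)/2` has derivative `e^{(t+t₁)/2}/2`, so `e^{(t₁-t)/2}` has derivative
`e^{t₁}/2`; by the same computation one step up, `e^{(t₁-t₂)/2}` has derivative `-e^{t₁}/2`.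
The two contributions cancel. -/

open Real

section ChainStep

variable {u w : ℝ → ℝ} {u' x : ℝ}

theorem hasDerivAt_exp_half_sub_of_chain (hu : HasDerivAt u u' x)
    (hw : HasDerivAt w (u' + exp ((u x + w x) / 2)) x) :
    HasDerivAt (fun y => exp ((w y - u y) / 2)) (exp (w x) / 2) x := by
  have hdiff : HasDerivAt (fun y => (w y - u y) / 2) (exp ((u x + w x) / 2) / 2) x :=
    ((hw.sub hu).div_const 2).congr_deriv (by ring)
  refine hdiff.exp.congr_deriv ?_
  rw [mul_div_assoc', ← exp_add]
  ring_nf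

theorem hasDerivAt_exp_half_sub_of_chain' (hu : HasDerivAt u u' x)
    (hw : HasDerivAt w (u' + exp ((u x + w x) / 2)) x) :
    HasDerivAt (fun y => exp ((u y - w y) / 2)) (-(exp (u x) / 2)) x := by
  have hdiff : HasDerivAt (fun y => (u y - w y) / 2) (-(exp ((u x + w x) / 2) / 2)) x :=
    ((hu.sub hw).div_const 2).congr_deriv (by ring)
  refine hdiff.exp.congr_deriv ?_
  rw [mul_neg, mul_div_assoc', ← exp_add]
  ring_nf

end ChainStep

/-- For the Adler–Startsev chain `t_{1,x} = t_x + e^{(t+t_1)/2}`, the function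
`F = e^{(t_1−t)/2} + e^{(t_1−t_2)/2}` is an x-integral. -/
theorem xIntegral_AdlerStartsev_chain (t t' : ℤ → ℝ → ℝ)
    (hderiv : ∀ n x, HasDerivAt (t n) (t' n x) x)
    (hchain : ∀ n x, t' (n + 1) x = t' n x + Real.exp ((t n x + t (n + 1) x) / 2))
    (n : ℤ) (x : ℝ) :
    HasDerivAt (fun y =>
      Real.exp ((t (n + 1) y - t n y) / 2) + Real.exp ((t (n + 1) y - t (n + 2) y) / 2)) 0 x := by
  have hstep : ∀ m, HasDerivAt (t (m + 1)) (t' m x + exp ((t m x + t (m + 1) x) / 2)) x :=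
    fun m => hchain m x ▸ hderiv (m + 1) x
  have hlower := hasDerivAt_exp_half_sub_of_chain (hderiv n x) (hstep n)
  have hupper := hasDerivAt_exp_half_sub_of_chain' (hderiv (n + 1) x) (hstep (n + 1))
  rw [add_assoc, one_add_one_eq_two] at hupper
  exact (hlower.add hupper).congr_deriv (add_neg_cancel _)
end

section
/- Suppose f(x,t,t_1,t_x) is smooth with f_{t_x t_x} ≠ 0 and satisfies D(f_{t_x t_x t_x}/f_{t_x t_x}) = (f_{t_x t_x t_x} f_{t_x} − 3 f_{t_x t_x}²)/(f_{t_x t_x} f_{t_x}²), where D(g) is obtained from g by substituting (t,t_1,t_x) ↦ (t_1,t_2,f). Then ∂/∂t_1 of (f_{t_x t_x t_x}/f_{t_x t_x}) = 0, i.e., f_{t_x t_x t_x}/f_{t_x t_x} does not depend on t_1. -/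
noncomputable section

/-- Partial derivative in the third slot (`t₁`). -/
def p3 (g : ℝ → ℝ → ℝ → ℝ → ℝ) (x t t1 tx : ℝ) : ℝ := deriv (fun s => g x t s tx) t1
/-- Partial derivative in the fourth slot (`t_x`). -/
def p4 (g : ℝ → ℝ → ℝ → ℝ → ℝ) (x t t1 tx : ℝ) : ℝ := deriv (fun s => g x t t1 s) tx

open Real Set

lemma down_aux (F : ℝ → ℝ) (hFd : Differentiable ℝ F) (hBd : Differentiable ℝ (deriv F))
    (M : ℝ) (hM : 0 < M) (hBpos : ∀ σ, 0 < deriv F σ)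
    (hC : ∀ σ ≤ 0, |deriv (deriv F) σ| ≤ M * (deriv F σ) ^ 3) (v : ℝ) :
    ∃ σ, F σ < v := by
  set B := deriv F with hBdef
  set C := deriv B with hCdef
  have hBne : ∀ σ, B σ ≠ 0 := fun σ => (hBpos σ).ne'
  have hGder : ∀ σ, HasDerivAt (fun τ => (B τ ^ 2)⁻¹)
      (-((2:ℕ) * B σ ^ (2-1) * C σ) / (B σ ^ 2) ^ 2) σ := fun σ =>
    (((hBd σ).hasDerivAt).pow 2).inv (pow_ne_zero 2 (hBne σ))
  have hHder : ∀ σ, HasDerivAt (fun τ => (B τ ^ 2)⁻¹ + 2 * M * τ)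
      (-((2:ℕ) * B σ ^ (2-1) * C σ) / (B σ ^ 2) ^ 2 + 2 * M) σ := fun σ =>
    (hGder σ).add (((hasDerivAt_id σ).const_mul (2 * M)).congr_deriv (by ring))
  have hHnonneg : ∀ σ ≤ 0, 0 ≤ -((2:ℕ) * B σ ^ (2-1) * C σ) / (B σ ^ 2) ^ 2 + 2 * M := by
    intro σ hσ
    have h1 : C σ ≤ M * B σ ^ 3 := le_trans (le_abs_self _) (hC σ hσ)
    have h2 : 0 < B σ := hBpos σ
    have h3 : 0 < (B σ ^ 2) ^ 2 := by positivity
    have h5 : ((2:ℕ) * B σ ^ (2-1) * C σ) / (B σ ^ 2) ^ 2 ≤ 2 * M :=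
      (div_le_iff₀ h3).mpr (by push_cast; nlinarith)
    rw [neg_div]
    linarith
  have hHmono : MonotoneOn (fun τ => (B τ ^ 2)⁻¹ + 2 * M * τ) (Iic (0:ℝ)) := by
    apply monotoneOn_of_deriv_nonneg (convex_Iic 0)
    · exact Continuous.continuousOn
        (continuous_iff_continuousAt.mpr fun σ => (hHder σ).continuousAt)
    · intro σ _
      exact (hHder σ).differentiableAt.differentiableWithinAt
    · intro σ hσ
      rw [(hHder σ).deriv]
      exact hHnonneg σ (le_of_lt (by simpa [interior_Iic] using hσ))
  have hGbound : ∀ σ ≤ 0, (B σ ^ 2)⁻¹ ≤ (B 0 ^ 2)⁻¹ - 2 * M * σ := by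
    intro σ hσ
    have := hHmono (mem_Iic.mpr hσ) (mem_Iic.mpr le_rfl) hσ
    simp only [mul_zero, add_zero] at this
    linarith
  set D : ℝ → ℝ := fun σ => (B 0 ^ 2)⁻¹ - 2 * M * σ with hDdef
  have hDpos : ∀ σ ≤ 0, 0 < D σ := by
    intro σ hσ
    have h1 : 0 < (B 0 ^ 2)⁻¹ := inv_pos.mpr (pow_pos (hBpos 0) 2)
    have h2 : 0 ≤ -(2 * M * σ) := by nlinarith
    simp only [hDdef]; linarith
  have hBlow : ∀ σ ≤ 0, (Real.sqrt (D σ))⁻¹ ≤ B σ := by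
    intro σ hσ
    have hD := hDpos σ hσ
    have h1 : 1 ≤ B σ ^ 2 * D σ := by
      have := mul_le_mul_of_nonneg_left (hGbound σ hσ)
        (le_of_lt (pow_pos (hBpos σ) 2))
      rw [mul_inv_cancel₀ (pow_pos (hBpos σ) 2).ne'] at this
      exact this
    have h2 : (D σ)⁻¹ ≤ B σ ^ 2 := by
      rw [inv_le_iff_one_le_mul₀ hD]
      linarith [h1]
    calc (Real.sqrt (D σ))⁻¹ = Real.sqrt ((D σ)⁻¹) := (Real.sqrt_inv _).symm
      _ ≤ Real.sqrt (B σ ^ 2) := Real.sqrt_le_sqrt h2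
      _ = B σ := Real.sqrt_sq (hBpos σ).le
  -- Z = F + M⁻¹ √(D ·) is monotone on Iic 0
  have hZder : ∀ σ ≤ 0, HasDerivAt (fun τ => F τ + M⁻¹ * Real.sqrt (D τ))
      (B σ + M⁻¹ * (1 / (2 * Real.sqrt (D σ)) * (-(2 * M)))) σ := by
    intro σ hσ
    have hDder : HasDerivAt D (-(2 * M)) σ := by
      have h1 : HasDerivAt (fun τ : ℝ => 2 * M * τ) (2 * M) σ :=
        ((hasDerivAt_id σ).const_mul (2 * M)).congr_deriv (by ring)
      simpa [hDdef] using h1.const_sub ((B 0 ^ 2)⁻¹)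
    have hsq : HasDerivAt Real.sqrt (1 / (2 * Real.sqrt (D σ))) (D σ) :=
      Real.hasDerivAt_sqrt (hDpos σ hσ).ne'
    have hcomp : HasDerivAt (fun τ => Real.sqrt (D τ))
        (1 / (2 * Real.sqrt (D σ)) * (-(2 * M))) σ := hsq.comp σ hDder
    exact (hFd σ).hasDerivAt.add (hcomp.const_mul M⁻¹)
  have hZmono : MonotoneOn (fun τ => F τ + M⁻¹ * Real.sqrt (D τ)) (Iic (0:ℝ)) := by
    apply monotoneOn_of_deriv_nonneg (convex_Iic 0)
    · exact fun σ hσ => ((hZder σ hσ).continuousAt.continuousWithinAt)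
    · intro σ hσ
      rw [interior_Iic] at hσ
      exact (hZder σ hσ.le).differentiableAt.differentiableWithinAt
    · intro σ hσ
      rw [interior_Iic] at hσ
      rw [(hZder σ hσ.le).deriv]
      have hs : 0 < Real.sqrt (D σ) := Real.sqrt_pos.mpr (hDpos σ hσ.le)
      have he : M⁻¹ * (1 / (2 * Real.sqrt (D σ)) * (-(2 * M))) = -(Real.sqrt (D σ))⁻¹ := by
        field_simp
      rw [he]
      have := hBlow σ hσ.le
      linarith
  set W : ℝ := max (M * (F 0 - v) + Real.sqrt (D 0)) 0 with hWdef
  set σ₀ : ℝ := -((W ^ 2 + 1) / (2 * M)) with hσ₀def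
  have hσ₀ : σ₀ ≤ 0 := by
    have h : 0 ≤ (W ^ 2 + 1) / (2 * M) := by positivity
    rw [hσ₀def]; exact neg_nonpos.mpr h
  have hDσ₀ : D σ₀ = (B 0 ^ 2)⁻¹ + (W ^ 2 + 1) := by
    simp only [hDdef, hσ₀def]
    field_simp
    ring
  have hsqrt : W < Real.sqrt (D σ₀) := by
    have h1 : W ^ 2 < D σ₀ := by
      rw [hDσ₀]
      have : 0 < (B 0 ^ 2)⁻¹ := inv_pos.mpr (pow_pos (hBpos 0) 2)
      linarith
    calc W = Real.sqrt (W ^ 2) := (Real.sqrt_sq (le_max_right _ 0)).symm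
      _ < Real.sqrt (D σ₀) := Real.sqrt_lt_sqrt (sq_nonneg _) h1
  have hZle := hZmono (mem_Iic.mpr hσ₀) (mem_Iic.mpr le_rfl) hσ₀
  refine ⟨σ₀, ?_⟩
  have hW : M * (F 0 - v) + Real.sqrt (D 0) ≤ W := le_max_left _ _
  have hMinv : 0 < M⁻¹ := inv_pos.mpr hM
  have hZle' : F σ₀ + M⁻¹ * Real.sqrt (D σ₀) ≤ F 0 + M⁻¹ * Real.sqrt (D 0) := hZle
  have m1 : M⁻¹ * W < M⁻¹ * Real.sqrt (D σ₀) := mul_lt_mul_of_pos_left hsqrt hMinv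
  have m2 : M⁻¹ * (M * (F 0 - v) + Real.sqrt (D 0)) ≤ M⁻¹ * W :=
    mul_le_mul_of_nonneg_left hW hMinv.le
  have hexp : M⁻¹ * (M * (F 0 - v) + Real.sqrt (D 0))
      = (F 0 - v) + M⁻¹ * Real.sqrt (D 0) := by
    rw [mul_add, ← mul_assoc, inv_mul_cancel₀ hM.ne', one_mul]
  linarith

/-- if `F' > 0` and `|F''| ≤ Φ(F)·(F')³` everywhere, `F` is unbounded below. -/
lemma aux_notBelow (F : ℝ → ℝ) (hFd : Differentiable ℝ F) (hBd : Differentiable ℝ (deriv F))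
    (Φ : ℝ → ℝ) (hΦ : Continuous Φ) (hBpos : ∀ σ, 0 < deriv F σ)
    (hrel : ∀ σ, |deriv (deriv F) σ| ≤ Φ (F σ) * (deriv F σ) ^ 3) (v : ℝ) :
    ∃ σ, F σ < v := by
  by_contra hcon
  push_neg at hcon
  have hmono : Monotone F := (strictMono_of_deriv_pos hBpos).monotone
  have hne : (Icc v (F 0)).Nonempty := ⟨v, le_refl v, hcon 0⟩
  obtain ⟨z, hz, hzmax⟩ := isCompact_Icc.exists_isMaxOn hne hΦ.continuousOn
  set M : ℝ := max (Φ z) 1 with hMdef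
  have hM : 0 < M := lt_of_lt_of_le one_pos (le_max_right _ _)
  have hbound : ∀ σ ≤ 0, |deriv (deriv F) σ| ≤ M * (deriv F σ) ^ 3 := by
    intro σ hσ
    refine le_trans (hrel σ) (mul_le_mul_of_nonneg_right ?_ (le_of_lt (pow_pos (hBpos σ) 3)))
    exact le_trans (hzmax ⟨hcon σ, hmono hσ⟩) (le_max_left _ _)
  obtain ⟨σ, hσ⟩ := down_aux F hFd hBd M hM hBpos hbound v
  exact absurd (hcon σ) (not_le.mpr hσ)

/-- positive-derivative case: surjectivity. -/
lemma surjPos (F : ℝ → ℝ) (hFd : Differentiable ℝ F) (hBd : Differentiable ℝ (deriv F))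
    (Φ : ℝ → ℝ) (hΦ : Continuous Φ) (hBpos : ∀ σ, 0 < deriv F σ)
    (hrel : ∀ σ, |deriv (deriv F) σ| ≤ Φ (F σ) * (deriv F σ) ^ 3) :
    Function.Surjective F := by
  intro v
  obtain ⟨a, ha⟩ := aux_notBelow F hFd hBd Φ hΦ hBpos hrel v
  set F2 : ℝ → ℝ := fun σ => -F (-σ) with hF2def
  have hF2d : Differentiable ℝ F2 := (hFd.comp differentiable_neg).neg
  have hd1 : ∀ σ, HasDerivAt F2 (deriv F (-σ)) σ := by
    intro σ
    have h1 : HasDerivAt (fun σ : ℝ => F (-σ)) (deriv F (-σ) * (-1)) σ :=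
      ((hFd (-σ)).hasDerivAt).comp σ (hasDerivAt_neg σ)
    exact (h1.neg).congr_deriv (by ring)
  have hderiv2 : deriv F2 = fun σ => deriv F (-σ) := funext fun σ => (hd1 σ).deriv
  have hB2pos : ∀ σ, 0 < deriv F2 σ := by rw [hderiv2]; exact fun σ => hBpos (-σ)
  have hB2d : Differentiable ℝ (deriv F2) := by
    rw [hderiv2]; exact hBd.comp differentiable_neg
  have hd2 : ∀ σ, deriv (deriv F2) σ = -(deriv (deriv F) (-σ)) := by
    intro σ
    rw [hderiv2]
    have h1 : HasDerivAt (fun σ : ℝ => deriv F (-σ)) (deriv (deriv F) (-σ) * (-1)) σ :=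
      ((hBd (-σ)).hasDerivAt).comp σ (hasDerivAt_neg σ)
    rw [h1.deriv]; ring
  have hrel2 : ∀ σ, |deriv (deriv F2) σ| ≤ (fun u => Φ (-u)) (F2 σ) * (deriv F2 σ) ^ 3 := by
    intro σ
    rw [hd2, abs_neg, hderiv2]
    simpa [hF2def] using hrel (-σ)
  obtain ⟨b, hb⟩ := aux_notBelow F2 hF2d hB2d (fun u => Φ (-u)) (hΦ.comp continuous_neg)
    hB2pos hrel2 (-v)
  have hbv : v < F (-b) := by
    have h2 : -F (-b) < -v := hb
    linarith
  exact intermediate_value_univ a (-b) hFd.continuous ⟨ha.le, hbv.le⟩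

/-- surjectivity from nonvanishing derivative and the growth relation. -/
lemma surjOf (F : ℝ → ℝ) (hFd : Differentiable ℝ F) (hBd : Differentiable ℝ (deriv F))
    (hBne : ∀ σ, deriv F σ ≠ 0)
    (Φ : ℝ → ℝ) (hΦ : Continuous Φ)
    (hrel : ∀ σ, |deriv (deriv F) σ| ≤ Φ (F σ) * |deriv F σ| ^ 3) :
    Function.Surjective F := by
  have hdich : (∀ σ, 0 < deriv F σ) ∨ (∀ σ, deriv F σ < 0) := by
    by_contra hcon
    push_neg at hcon
    obtain ⟨⟨a, ha⟩, ⟨b, hb⟩⟩ := hcon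
    have ha' : deriv F a < 0 := lt_of_le_of_ne ha (hBne a)
    have hb' : 0 < deriv F b := lt_of_le_of_ne hb (Ne.symm (hBne b))
    obtain ⟨c, hc⟩ := intermediate_value_univ a b hBd.continuous ⟨ha'.le, hb'.le⟩
    exact hBne c hc
  rcases hdich with hpos | hneg
  · refine surjPos F hFd hBd Φ hΦ hpos (fun σ => ?_)
    have h := hrel σ
    rwa [abs_of_pos (hpos σ)] at h
  · have hGd : Differentiable ℝ (fun σ => -F σ) := hFd.neg
    have hdG : deriv (fun σ => -F σ) = fun σ => -(deriv F σ) := funext fun σ => deriv.neg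
    have hGBd : Differentiable ℝ (deriv (fun σ => -F σ)) := by rw [hdG]; exact hBd.neg
    have hGpos : ∀ σ, 0 < deriv (fun σ => -F σ) σ := by
      rw [hdG]; exact fun σ => neg_pos.mpr (hneg σ)
    have hdG2 : ∀ σ, deriv (deriv (fun σ => -F σ)) σ = -(deriv (deriv F) σ) := by
      intro σ; rw [hdG]; exact deriv.neg
    have hrelG : ∀ σ, |deriv (deriv (fun σ => -F σ)) σ| ≤
        (fun u => Φ (-u)) ((fun σ => -F σ) σ) * (deriv (fun σ => -F σ) σ) ^ 3 := by
      intro σ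
      rw [hdG2, abs_neg, hdG]
      have h := hrel σ
      have habs : |deriv F σ| = -deriv F σ := abs_of_neg (hneg σ)
      simp only [neg_neg]
      calc |deriv (deriv F) σ| ≤ Φ (F σ) * |deriv F σ| ^ 3 := h
        _ = Φ (F σ) * (-deriv F σ) ^ 3 := by rw [habs]
    have hsurj := surjPos (fun σ => -F σ) hGd hGBd (fun u => Φ (-u))
      (hΦ.comp continuous_neg) hGpos hrelG
    intro v
    obtain ⟨a, ha⟩ := hsurj (-v)
    exact ⟨a, by simpa using congrArg Neg.neg ha⟩

/-- if a smooth `f` with `f_{t_x} ≠ 0`, `f_{t_x t_x} ≠ 0` satisfies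
condition (5), then `f_{t_x t_x t_x}/f_{t_x t_x}` does not depend on `t₁`. -/
theorem ratio_independent_of_t1 (f : ℝ → ℝ → ℝ → ℝ → ℝ)
    (hf : ContDiff ℝ (⊤ : ℕ∞) (fun p : ℝ × ℝ × ℝ × ℝ => f p.1 p.2.1 p.2.2.1 p.2.2.2))
    (hftx : ∀ x t t1 tx, p4 f x t t1 tx ≠ 0)
    (hftxtx : ∀ x t t1 tx, p4 (p4 f) x t t1 tx ≠ 0)
    (hcond : ∀ x t t1 t2 tx,
      p4 (p4 (p4 f)) x t1 t2 (f x t t1 tx) / p4 (p4 f) x t1 t2 (f x t t1 tx)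
        = (p4 (p4 (p4 f)) x t t1 tx * p4 f x t t1 tx - 3 * (p4 (p4 f) x t t1 tx) ^ 2)
          / (p4 (p4 f) x t t1 tx * (p4 f x t t1 tx) ^ 2)) :
    ∀ x t t1 tx,
      p3 (fun x t t1 tx => p4 (p4 (p4 f)) x t t1 tx / p4 (p4 f) x t t1 tx) x t t1 tx = 0 := by

  intro x t t1 tx
  -- smoothness of one-variable slices and their derivatives
  have hslice : ∀ a b c : ℝ, ContDiff ℝ (⊤:ℕ∞) (fun s => f a b c s) := by
    intro a b c
    have h1 : ContDiff ℝ (⊤:ℕ∞) (fun s : ℝ => ((a, b, c, s) : ℝ × ℝ × ℝ × ℝ)) :=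
      ContDiff.prodMk contDiff_const (ContDiff.prodMk contDiff_const (ContDiff.prodMk contDiff_const contDiff_id))
    exact (hf.of_le (by simp)).comp h1
  have hD1 : ∀ a b c : ℝ, Differentiable ℝ (fun s => f a b c s) :=
    fun a b c => (contDiff_infty_iff_deriv.mp (hslice a b c)).1
  have hS1 : ∀ a b c : ℝ, ContDiff ℝ (⊤:ℕ∞) (fun s => p4 f a b c s) :=
    fun a b c => (contDiff_infty_iff_deriv.mp (hslice a b c)).2
  have hD2 : ∀ a b c : ℝ, Differentiable ℝ (fun s => p4 f a b c s) :=
    fun a b c => (contDiff_infty_iff_deriv.mp (hS1 a b c)).1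
  have hS2 : ∀ a b c : ℝ, ContDiff ℝ (⊤:ℕ∞) (fun s => p4 (p4 f) a b c s) :=
    fun a b c => (contDiff_infty_iff_deriv.mp (hS1 a b c)).2
  have hD3 : ∀ a b c : ℝ, Differentiable ℝ (fun s => p4 (p4 f) a b c s) :=
    fun a b c => (contDiff_infty_iff_deriv.mp (hS2 a b c)).1
  -- pointwise derivative facts
  have hgB : ∀ σ : ℝ, HasDerivAt (fun s => f x t t s) (p4 f x t t σ) σ :=
    fun σ => (hD1 x t t σ).hasDerivAt
  have hBC : ∀ σ : ℝ, HasDerivAt (fun s => p4 f x t t s) (p4 (p4 f) x t t σ) σ :=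
    fun σ => (hD2 x t t σ).hasDerivAt
  have hCA : ∀ σ : ℝ, HasDerivAt (fun s => p4 (p4 f) x t t s) (p4 (p4 (p4 f)) x t t σ) σ :=
    fun σ => (hD3 x t t σ).hasDerivAt
  have hC3 : ∀ u : ℝ, HasDerivAt (fun s => p4 (p4 f) x t 0 s) (p4 (p4 (p4 f)) x t 0 u) u :=
    fun u => (hD3 x t 0 u).hasDerivAt
  -- the first integral ψ is constant
  set ψ : ℝ → ℝ := fun σ =>
    p4 (p4 f) x t 0 (f x t t σ) * (p4 f x t t σ) ^ 3 / p4 (p4 f) x t t σ with hψdef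
  have hψ : ∀ σ, HasDerivAt ψ 0 σ := by
    intro σ
    have h1 : HasDerivAt (fun σ => p4 (p4 f) x t 0 (f x t t σ))
        (p4 (p4 (p4 f)) x t 0 (f x t t σ) * p4 f x t t σ) σ :=
      (hC3 (f x t t σ)).comp σ (hgB σ)
    have h2 : HasDerivAt (fun σ => (p4 f x t t σ) ^ 3)
        ((3:ℕ) * (p4 f x t t σ) ^ (3-1) * p4 (p4 f) x t t σ) σ := (hBC σ).pow 3
    have h3 := (h1.mul h2).div (hCA σ) (hftxtx x t t σ)
    have hkey : p4 (p4 (p4 f)) x t 0 (f x t t σ) * (p4 (p4 f) x t t σ * (p4 f x t t σ) ^ 2)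
        = (p4 (p4 (p4 f)) x t t σ * p4 f x t t σ - 3 * (p4 (p4 f) x t t σ) ^ 2)
          * p4 (p4 f) x t 0 (f x t t σ) := by
      have h4 := hcond x t t 0 σ
      rw [div_eq_div_iff (hftxtx x t 0 (f x t t σ))
        (mul_ne_zero (hftxtx x t t σ) (pow_ne_zero 2 (hftx x t t σ)))] at h4
      exact h4
    refine h3.congr_deriv ?_
    rw [div_eq_zero_iff]
    left
    push_cast
    simp only [Pi.mul_apply]
    linear_combination (p4 f x t t σ) ^ 2 * hkey
  have hψd : Differentiable ℝ ψ := fun σ => (hψ σ).differentiableAt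
  have hψc : ∀ σ, ψ σ = ψ 0 :=
    fun σ => is_const_of_deriv_eq_zero hψd (fun σ => (hψ σ).deriv) σ 0
  obtain ⟨K, hK⟩ : ∃ K : ℝ, ∀ σ,
      p4 (p4 f) x t 0 (f x t t σ) * (p4 f x t t σ) ^ 3 / p4 (p4 f) x t t σ = K :=
    ⟨ψ 0, fun σ => hψc σ⟩
  have hKne : K ≠ 0 := by
    rw [← hK 0]
    exact div_ne_zero (mul_ne_zero (hftxtx x t 0 (f x t t 0)) (pow_ne_zero 3 (hftx x t t 0)))
      (hftxtx x t t 0)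
  -- the growth relation
  have hrel : ∀ σ, |p4 (p4 f) x t t σ| ≤
      (fun u => |p4 (p4 f) x t 0 u| / |K|) (f x t t σ) * |p4 f x t t σ| ^ 3 := by
    intro σ
    have h2 := (div_eq_iff (hftxtx x t t σ)).mp (hK σ)
    have h3 : p4 (p4 f) x t t σ
        = p4 (p4 f) x t 0 (f x t t σ) * (p4 f x t t σ) ^ 3 / K := by
      rw [eq_div_iff hKne]
      linear_combination -h2
    rw [h3, abs_div, abs_mul, abs_pow]
    exact le_of_eq (by ring)
  have hΦc : Continuous (fun u => |p4 (p4 f) x t 0 u| / |K|) :=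
    ((hS2 x t 0).continuous.abs).div_const _
  -- surjectivity of the slice
  have hsurj : Function.Surjective (fun σ => f x t t σ) :=
    surjOf (fun σ => f x t t σ) (hD1 x t t) (hD2 x t t) (fun σ => hftx x t t σ)
      (fun u => |p4 (p4 f) x t 0 u| / |K|) hΦc hrel
  obtain ⟨σ, hσ⟩ := hsurj tx
  have hσ' : f x t t σ = tx := hσ
  -- conclude: the function of s is constant
  show deriv (fun s => p4 (p4 (p4 f)) x t s tx / p4 (p4 f) x t s tx) t1 = 0
  have hconst : (fun s => p4 (p4 (p4 f)) x t s tx / p4 (p4 f) x t s tx)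
      = fun _ => (p4 (p4 (p4 f)) x t t σ * p4 f x t t σ - 3 * (p4 (p4 f) x t t σ) ^ 2)
        / (p4 (p4 f) x t t σ * (p4 f x t t σ) ^ 2) := by
    funext s
    rw [← hσ']
    exact hcond x t t s σ
  rw [hconst]
  exact deriv_const _ _
end
end

section
/- Suppose f(x,t,t_1,t_x) is smooth with f_{t_x} ≠ 0, f_{t_x t_x} ≠ 0, and the function f_{t_x t_x t_x}/f_{t_x t_x} does not depend on t_1. Then f has the form f = M(x,t,t_x)·A(x,t,t_1) + t_x·B(x,t,t_1) + C(x,t,t_1) for some smooth functions M, A, B, C. -/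
noncomputable section

lemma contDiff_p4 {f : ℝ → ℝ → ℝ → ℝ → ℝ}
    (hf : ContDiff ℝ (⊤ : ℕ∞) (fun p : ℝ × ℝ × ℝ × ℝ => f p.1 p.2.1 p.2.2.1 p.2.2.2)) :
    ContDiff ℝ (⊤ : ℕ∞) (fun p : ℝ × ℝ × ℝ × ℝ => p4 f p.1 p.2.1 p.2.2.1 p.2.2.2) := by
  set F := fun p : ℝ × ℝ × ℝ × ℝ => f p.1 p.2.1 p.2.2.1 p.2.2.2 with hF
  have key : ∀ x t t1 tx : ℝ, p4 f x t t1 tx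
      = fderiv ℝ F (x, t, t1, tx) (0, 0, 0, 1) := by
    intro x t t1 tx
    have hγ : HasDerivAt (fun s : ℝ => ((x, t, t1, s) : ℝ × ℝ × ℝ × ℝ))
        ((0 : ℝ), (0 : ℝ), (0 : ℝ), (1 : ℝ)) tx :=
      (hasDerivAt_const tx x).prodMk ((hasDerivAt_const tx t).prodMk
        ((hasDerivAt_const tx t1).prodMk (hasDerivAt_id' tx)))
    have hFd : HasFDerivAt F (fderiv ℝ F (x, t, t1, tx)) (x, t, t1, tx) :=
      (hf.differentiable (by simp) (x, t, t1, tx)).hasFDerivAt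
    exact (hFd.comp_hasDerivAt tx hγ).deriv
  have : (fun p : ℝ × ℝ × ℝ × ℝ => p4 f p.1 p.2.1 p.2.2.1 p.2.2.2)
      = fun p => fderiv ℝ F p (0, 0, 0, 1) := by
    funext p; exact key p.1 p.2.1 p.2.2.1 p.2.2.2
  rw [this]
  exact (hf.fderiv_right (by simp)).clm_apply contDiff_const

/-- slice in the last variable -/
lemma contDiff_slice4 {g : ℝ → ℝ → ℝ → ℝ → ℝ}
    (hg : ContDiff ℝ (⊤ : ℕ∞) (fun p : ℝ × ℝ × ℝ × ℝ => g p.1 p.2.1 p.2.2.1 p.2.2.2))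
    (x t c : ℝ) : ContDiff ℝ (⊤ : ℕ∞) (fun s => g x t c s) :=
  hg.comp (contDiff_const.prodMk (contDiff_const.prodMk (contDiff_const.prodMk contDiff_id)))

/-- slice in the third variable -/
lemma contDiff_slice3 {g : ℝ → ℝ → ℝ → ℝ → ℝ}
    (hg : ContDiff ℝ (⊤ : ℕ∞) (fun p : ℝ × ℝ × ℝ × ℝ => g p.1 p.2.1 p.2.2.1 p.2.2.2))
    (x t tx : ℝ) : ContDiff ℝ (⊤ : ℕ∞) (fun s => g x t s tx) :=
  hg.comp (contDiff_const.prodMk (contDiff_const.prodMk (contDiff_id.prodMk contDiff_const)))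

/-- restriction to 3 variables with last slot frozen -/
lemma contDiff_freeze4 {g : ℝ → ℝ → ℝ → ℝ → ℝ}
    (hg : ContDiff ℝ (⊤ : ℕ∞) (fun p : ℝ × ℝ × ℝ × ℝ => g p.1 p.2.1 p.2.2.1 p.2.2.2))
    (c : ℝ) : ContDiff ℝ (⊤ : ℕ∞) (fun p : ℝ × ℝ × ℝ => g p.1 p.2.1 p.2.2 c) :=
  hg.comp (contDiff_fst.prodMk (contDiff_snd.fst.prodMk (contDiff_snd.snd.prodMk contDiff_const)))

/-- restriction to 3 variables with third slot frozen -/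
lemma contDiff_freeze3 {g : ℝ → ℝ → ℝ → ℝ → ℝ}
    (hg : ContDiff ℝ (⊤ : ℕ∞) (fun p : ℝ × ℝ × ℝ × ℝ => g p.1 p.2.1 p.2.2.1 p.2.2.2))
    (c : ℝ) : ContDiff ℝ (⊤ : ℕ∞) (fun p : ℝ × ℝ × ℝ => g p.1 p.2.1 c p.2.2) :=
  hg.comp (contDiff_fst.prodMk (contDiff_snd.fst.prodMk (contDiff_const.prodMk contDiff_snd.snd)))

/-- restriction to 3 variables with third and fourth slots frozen -/
lemma contDiff_freeze34 {g : ℝ → ℝ → ℝ → ℝ → ℝ}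
    (hg : ContDiff ℝ (⊤ : ℕ∞) (fun p : ℝ × ℝ × ℝ × ℝ => g p.1 p.2.1 p.2.2.1 p.2.2.2))
    (c d : ℝ) : ContDiff ℝ (⊤ : ℕ∞) (fun p : ℝ × ℝ × ℝ => g p.1 p.2.1 c d) :=
  hg.comp (contDiff_fst.prodMk (contDiff_snd.fst.prodMk (contDiff_const.prodMk contDiff_const)))

/-- the slice of `g` in the last variable has derivative `p4 g`. -/
lemma hasDerivAt_p4 {g : ℝ → ℝ → ℝ → ℝ → ℝ}
    (hg : ContDiff ℝ (⊤ : ℕ∞) (fun p : ℝ × ℝ × ℝ × ℝ => g p.1 p.2.1 p.2.2.1 p.2.2.2))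
    (x t c s : ℝ) : HasDerivAt (fun u => g x t c u) (p4 g x t c s) s :=
  ((contDiff_slice4 hg x t c).differentiable (by simp) s).hasDerivAt

/-- Lemma 1: if `f` is smooth with `f_{t_x} ≠ 0`, `f_{t_x t_x} ≠ 0` and
`f_{t_x t_x t_x}/f_{t_x t_x}` does not depend on `t₁`, then
`f = M(x,t,t_x)·A(x,t,t₁) + t_x·B(x,t,t₁) + C(x,t,t₁)`. -/
theorem separated_form (f : ℝ → ℝ → ℝ → ℝ → ℝ)
    (hf : ContDiff ℝ (⊤ : ℕ∞) (fun p : ℝ × ℝ × ℝ × ℝ => f p.1 p.2.1 p.2.2.1 p.2.2.2))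
    (hftx : ∀ x t t1 tx, p4 f x t t1 tx ≠ 0)
    (hftxtx : ∀ x t t1 tx, p4 (p4 f) x t t1 tx ≠ 0)
    (hindep : ∀ x t t1 tx,
      p3 (fun x t t1 tx => p4 (p4 (p4 f)) x t t1 tx / p4 (p4 f) x t t1 tx) x t t1 tx = 0) :
    ∃ M A B C : ℝ → ℝ → ℝ → ℝ,
      ContDiff ℝ (⊤ : ℕ∞) (fun p : ℝ × ℝ × ℝ => M p.1 p.2.1 p.2.2) ∧
      ContDiff ℝ (⊤ : ℕ∞) (fun p : ℝ × ℝ × ℝ => A p.1 p.2.1 p.2.2) ∧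
      ContDiff ℝ (⊤ : ℕ∞) (fun p : ℝ × ℝ × ℝ => B p.1 p.2.1 p.2.2) ∧
      ContDiff ℝ (⊤ : ℕ∞) (fun p : ℝ × ℝ × ℝ => C p.1 p.2.1 p.2.2) ∧
      ∀ x t t1 tx, f x t t1 tx = M x t tx * A x t t1 + tx * B x t t1 + C x t t1 := by
  have h4 := contDiff_p4 hf
  have h44 := contDiff_p4 h4
  have h444 := contDiff_p4 h44
  refine ⟨fun x t tx => f x t 0 tx - tx * p4 f x t 0 0 - f x t 0 0,
    fun x t t1 => p4 (p4 f) x t t1 0 / p4 (p4 f) x t 0 0,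
    fun x t t1 => p4 f x t t1 0,
    fun x t t1 => f x t t1 0, ?_, ?_, ?_, ?_, ?_⟩
  · exact ((contDiff_freeze3 hf 0).sub
      (contDiff_snd.snd.mul (contDiff_freeze34 h4 0 0))).sub (contDiff_freeze34 hf 0 0)
  · exact (contDiff_freeze4 h44 0).div (contDiff_freeze34 h44 0 0)
      (fun p => hftxtx p.1 p.2.1 0 0)
  · exact contDiff_freeze4 h4 0
  · exact contDiff_freeze4 hf 0
  intro x t t1 tx
  -- Step 1 : the ratio is independent of t1
  have ratio : ∀ s : ℝ, p4 (p4 (p4 f)) x t t1 s / p4 (p4 f) x t t1 s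
      = p4 (p4 (p4 f)) x t 0 s / p4 (p4 f) x t 0 s := by
    intro s
    have hdiff : Differentiable ℝ
        (fun u => p4 (p4 (p4 f)) x t u s / p4 (p4 f) x t u s) :=
      ((contDiff_slice3 h444 x t s).div (contDiff_slice3 h44 x t s)
        (fun u => hftxtx x t u s)).differentiable (by simp)
    exact is_const_of_deriv_eq_zero hdiff (fun u => hindep x t u s) t1 0
  -- Step 2 : f_{txtx}(t1,s) * f_{txtx}(0,0) = f_{txtx}(0,s) * f_{txtx}(t1,0)
  have step2 : ∀ s : ℝ, p4 (p4 f) x t t1 s * p4 (p4 f) x t 0 0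
      = p4 (p4 f) x t 0 s * p4 (p4 f) x t t1 0 := by
    have hR : ∀ s : ℝ, HasDerivAt
        (fun u => p4 (p4 f) x t t1 u / p4 (p4 f) x t 0 u) 0 s := by
      intro s
      have h1 := hasDerivAt_p4 h44 x t t1 s
      have h2 := hasDerivAt_p4 h44 x t 0 s
      have hdiv := h1.div h2 (hftxtx x t 0 s)
      have hnum : p4 (p4 (p4 f)) x t t1 s * p4 (p4 f) x t 0 s
          - p4 (p4 f) x t t1 s * p4 (p4 (p4 f)) x t 0 s = 0 := by
        have h := ratio s
        rw [div_eq_div_iff (hftxtx x t t1 s) (hftxtx x t 0 s)] at h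
        linear_combination h
      rw [hnum] at hdiv
      simp at hdiv
      exact hdiv
    intro s
    have hconst' : p4 (p4 f) x t t1 s / p4 (p4 f) x t 0 s
        = p4 (p4 f) x t t1 0 / p4 (p4 f) x t 0 0 := by
      have : ∀ u v : ℝ, (fun u => p4 (p4 f) x t t1 u / p4 (p4 f) x t 0 u) u
          = (fun u => p4 (p4 f) x t t1 u / p4 (p4 f) x t 0 u) v :=
        is_const_of_deriv_eq_zero (fun u => (hR u).differentiableAt)
          (fun u => (hR u).deriv)
      exact this s 0
    rw [div_eq_div_iff (hftxtx x t 0 s) (hftxtx x t 0 0)] at hconst'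
    linear_combination hconst'
  -- Step 3 : conclude
  set a : ℝ := p4 (p4 f) x t t1 0 / p4 (p4 f) x t 0 0 with ha
  set k0 : ℝ := p4 f x t 0 0 with hk0
  set c0 : ℝ := f x t 0 0 with hc0
  set b : ℝ := p4 f x t t1 0 with hb
  set c : ℝ := f x t t1 0 with hc
  -- Ψ is the derivative of Φ
  have hΨ : ∀ s : ℝ, HasDerivAt
      (fun u => f x t t1 u - ((f x t 0 u - u * k0 - c0) * a + u * b + c))
      (p4 f x t t1 s - ((p4 f x t 0 s - k0) * a + b)) s := by
    intro s
    have hF1 := hasDerivAt_p4 hf x t t1 s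
    have hF0 := hasDerivAt_p4 hf x t 0 s
    have inner : HasDerivAt
        (fun u => (f x t 0 u - u * k0 - c0) * a + u * b + c)
        ((p4 f x t 0 s - k0) * a + b) s := by
      have h1 : HasDerivAt (fun u : ℝ => f x t 0 u - u * k0 - c0)
          (p4 f x t 0 s - k0) s := by
        simpa using (hF0.sub ((hasDerivAt_id' s).mul_const k0)).sub_const c0
      simpa using ((h1.mul_const a).add ((hasDerivAt_id' s).mul_const b)).add_const c
    exact hF1.sub inner
  -- Ψ has zero derivative
  have hΨ' : ∀ s : ℝ, HasDerivAt
      (fun u => p4 f x t t1 u - ((p4 f x t 0 u - k0) * a + b)) 0 s := by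
    intro s
    have h1 := hasDerivAt_p4 (g := p4 f) h4 x t t1 s
    have h0 := hasDerivAt_p4 (g := p4 f) h4 x t 0 s
    have inner : HasDerivAt (fun u => (p4 f x t 0 u - k0) * a + b)
        (p4 (p4 f) x t 0 s * a) s := by
      simpa using ((h0.sub_const k0).mul_const a).add_const b
    have h2 := h1.sub inner
    have hz : p4 (p4 f) x t t1 s - p4 (p4 f) x t 0 s * a = 0 := by
      rw [ha, sub_eq_zero]
      have d := hftxtx x t 0 0
      field_simp
      linear_combination step2 s
    rwa [hz] at h2
  -- Ψ is constant, equal to its value at 0, which is 0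
  have hΨ0 : ∀ s : ℝ, p4 f x t t1 s - ((p4 f x t 0 s - k0) * a + b) = 0 := by
    intro s
    have hconst : ∀ u v : ℝ,
        (fun u => p4 f x t t1 u - ((p4 f x t 0 u - k0) * a + b)) u
        = (fun u => p4 f x t t1 u - ((p4 f x t 0 u - k0) * a + b)) v :=
      is_const_of_deriv_eq_zero (fun u => (hΨ' u).differentiableAt)
        (fun u => (hΨ' u).deriv)
    have heq := hconst s 0
    simp only at heq
    rw [heq]
    ring
  -- So Φ has zero derivative everywhere
  have hΦ' : ∀ s : ℝ, HasDerivAt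
      (fun u => f x t t1 u - ((f x t 0 u - u * k0 - c0) * a + u * b + c)) 0 s := by
    intro s
    have := hΨ s
    rwa [hΨ0 s] at this
  have hΦconst : ∀ u v : ℝ,
      (fun u => f x t t1 u - ((f x t 0 u - u * k0 - c0) * a + u * b + c)) u
      = (fun u => f x t t1 u - ((f x t 0 u - u * k0 - c0) * a + u * b + c)) v :=
    is_const_of_deriv_eq_zero (fun u => (hΦ' u).differentiableAt)
      (fun u => (hΦ' u).deriv)
  have hfin := hΦconst tx 0
  simp only at hfin
  have hΦ0 : f x t t1 0 - ((f x t 0 0 - 0 * k0 - c0) * a + 0 * b + c) = 0 := by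
    ring
  rw [hΦ0] at hfin
  have : f x t t1 tx = (f x t 0 tx - tx * k0 - c0) * a + tx * b + c := by linarith
  exact this
end
end

section
/- Suppose f(x,t,t_1,t_x) is smooth with f_{t_x} ≠ 0, f_{t_x t_x} ≠ 0, and satisfies D(f_{t_x t_x t_x}/f_{t_x t_x}) = (f_{t_x t_x t_x} f_{t_x} − 3 f_{t_x t_x}²)/(f_{t_x t_x} f_{t_x}²), where D is the shift (t,t_1,t_x) ↦ (t_1,t_2,f). Then there exist smooth functions H_1, H_2, H_3 of (x,t,t_1,t_2) such that Df = −H_1·t_x + H_2·f + H_3, i.e., f(x,t_1,t_2,f(x,t,t_1,t_x)) = −H_1(x,t,t_1,t_2)·t_x + H_2(x,t,t_1,t_2)·f(x,t,t_1,t_x) + H_3(x,t,t_1,t_2). -/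
noncomputable section

lemma top_deriv {g : ℝ → ℝ} (h : ContDiff ℝ (⊤ : ℕ∞) g) : ContDiff ℝ (⊤ : ℕ∞) (deriv g) := by
  exact (contDiff_infty_iff_deriv.mp h).2

lemma p4_eq_fderiv (g : ℝ → ℝ → ℝ → ℝ → ℝ)
    (hg : ContDiff ℝ (⊤ : ℕ∞) (fun p : ℝ × ℝ × ℝ × ℝ => g p.1 p.2.1 p.2.2.1 p.2.2.2))
    (x t t1 tx : ℝ) :
    p4 g x t t1 tx
      = fderiv ℝ (fun p : ℝ × ℝ × ℝ × ℝ => g p.1 p.2.1 p.2.2.1 p.2.2.2)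
          (x, t, t1, tx) ((0, 0, 0, 1) : ℝ × ℝ × ℝ × ℝ) := by
  have hι : HasDerivAt (fun s : ℝ => ((x, t, t1, s) : ℝ × ℝ × ℝ × ℝ))
      ((0, 0, 0, 1) : ℝ × ℝ × ℝ × ℝ) tx :=
    (hasDerivAt_const tx x).prodMk ((hasDerivAt_const tx t).prodMk
      ((hasDerivAt_const tx t1).prodMk (hasDerivAt_id tx)))
  have h := ((hg.differentiable (by simp) (x, t, t1, tx)).hasFDerivAt).comp_hasDerivAt tx hι
  exact h.deriv

lemma p4_contDiff (g : ℝ → ℝ → ℝ → ℝ → ℝ)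
    (hg : ContDiff ℝ (⊤ : ℕ∞) (fun p : ℝ × ℝ × ℝ × ℝ => g p.1 p.2.1 p.2.2.1 p.2.2.2)) :
    ContDiff ℝ (⊤ : ℕ∞) (fun p : ℝ × ℝ × ℝ × ℝ => p4 g p.1 p.2.1 p.2.2.1 p.2.2.2) := by
  have e : (fun p : ℝ × ℝ × ℝ × ℝ => p4 g p.1 p.2.1 p.2.2.1 p.2.2.2)
      = fun p : ℝ × ℝ × ℝ × ℝ =>
        fderiv ℝ (fun q : ℝ × ℝ × ℝ × ℝ => g q.1 q.2.1 q.2.2.1 q.2.2.2) p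
          ((0, 0, 0, 1) : ℝ × ℝ × ℝ × ℝ) :=
    funext fun p => p4_eq_fderiv g hg p.1 p.2.1 p.2.2.1 p.2.2.2
  rw [e]
  exact (hg.fderiv_right (le_refl _)).clm_apply contDiff_const

/-- The one-dimensional core of Lemma 2. -/
lemma key (u φ : ℝ → ℝ) (hu : ContDiff ℝ (⊤ : ℕ∞) u) (hφ : ContDiff ℝ (⊤ : ℕ∞) φ)
    (hu' : ∀ s, deriv u s ≠ 0) (hu'' : ∀ s, deriv (deriv u) s ≠ 0)
    (hφ'' : ∀ s, deriv (deriv φ) (u s) ≠ 0)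
    (hcond : ∀ s, deriv (deriv (deriv φ)) (u s) / deriv (deriv φ) (u s)
      = (deriv (deriv (deriv u)) s * deriv u s - 3 * (deriv (deriv u) s) ^ 2)
        / (deriv (deriv u) s * (deriv u s) ^ 2))
    (H1 H2 H3 : ℝ)
    (hH2 : H2 = (deriv (deriv φ) (u 0) * (deriv u 0) ^ 2
        + deriv φ (u 0) * deriv (deriv u) 0) / deriv (deriv u) 0)
    (hH1 : H1 = H2 * deriv u 0 - deriv φ (u 0) * deriv u 0)
    (hH3 : H3 = φ (u 0) - H2 * u 0) :
    ∀ s, φ (u s) = -H1 * s + H2 * u s + H3 := by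
  have hud : Differentiable ℝ u := hu.differentiable (by simp)
  have hu1 : ContDiff ℝ (⊤ : ℕ∞) (deriv u) := top_deriv hu
  have hu2 : ContDiff ℝ (⊤ : ℕ∞) (deriv (deriv u)) := top_deriv hu1
  have hφ1 : ContDiff ℝ (⊤ : ℕ∞) (deriv φ) := top_deriv hφ
  have hφ2 : ContDiff ℝ (⊤ : ℕ∞) (deriv (deriv φ)) := top_deriv hφ1
  have Hu : ∀ s, HasDerivAt u (deriv u s) s := fun s => (hud s).hasDerivAt
  have Hu1 : ∀ s, HasDerivAt (deriv u) (deriv (deriv u) s) s :=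
    fun s => (hu1.differentiable (by simp) s).hasDerivAt
  have Hu2 : ∀ s, HasDerivAt (deriv (deriv u)) (deriv (deriv (deriv u)) s) s :=
    fun s => (hu2.differentiable (by simp) s).hasDerivAt
  have Hφu : ∀ s, HasDerivAt (fun r => φ (u r)) (deriv φ (u s) * deriv u s) s :=
    fun s => ((hφ.differentiable (by simp) (u s)).hasDerivAt).comp s (Hu s)
  have Hφ1u : ∀ s, HasDerivAt (fun r => deriv φ (u r))
      (deriv (deriv φ) (u s) * deriv u s) s :=
    fun s => ((hφ1.differentiable (by simp) (u s)).hasDerivAt).comp s (Hu s)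
  have Hφ2u : ∀ s, HasDerivAt (fun r => deriv (deriv φ) (u r))
      (deriv (deriv (deriv φ)) (u s) * deriv u s) s :=
    fun s => ((hφ2.differentiable (by simp) (u s)).hasDerivAt).comp s (Hu s)
  -- V is the second derivative of φ ∘ u
  set V : ℝ → ℝ := fun s =>
    deriv (deriv φ) (u s) * (deriv u s) ^ 2 + deriv φ (u s) * deriv (deriv u) s with hVdef
  have HV : ∀ s, HasDerivAt V
      (deriv (deriv (deriv φ)) (u s) * deriv u s * (deriv u s) ^ 2
        + deriv (deriv φ) (u s) * ((2 : ℕ) * (deriv u s) ^ 1 * deriv (deriv u) s)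
        + (deriv (deriv φ) (u s) * deriv u s * deriv (deriv u) s
            + deriv φ (u s) * deriv (deriv (deriv u)) s)) s := by
    intro s
    exact ((Hφ2u s).mul ((Hu1 s).pow 2)).add ((Hφ1u s).mul (Hu2 s))
  -- Q = V / u'' has zero derivative, by condition (5)
  set Q : ℝ → ℝ := fun s => V s / deriv (deriv u) s with hQdef
  have HQ : ∀ s, HasDerivAt Q 0 s := by
    intro s
    have h := (HV s).div (Hu2 s) (hu'' s)
    have hc := hcond s
    rw [div_eq_div_iff (hφ'' s)
      (mul_ne_zero (hu'' s) (pow_ne_zero 2 (hu' s)))] at hc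
    have e : ((deriv (deriv (deriv φ)) (u s) * deriv u s * (deriv u s) ^ 2
        + deriv (deriv φ) (u s) * ((2 : ℕ) * (deriv u s) ^ 1 * deriv (deriv u) s)
        + (deriv (deriv φ) (u s) * deriv u s * deriv (deriv u) s
            + deriv φ (u s) * deriv (deriv (deriv u)) s)) * deriv (deriv u) s
        - V s * deriv (deriv (deriv u)) s) / (deriv (deriv u) s) ^ 2 = 0 := by
      rw [div_eq_zero_iff]
      left
      simp only [hVdef]
      push_cast
      linear_combination (deriv u s) * hc
    rw [e] at h
    exact h
  have hQconst : ∀ s, Q s = Q 0 :=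
    fun s => is_const_of_deriv_eq_zero (fun r => (HQ r).differentiableAt)
      (fun r => (HQ r).deriv) s 0
  have hH2Q : H2 = Q 0 := hH2
  have hVeq : ∀ s, V s = H2 * deriv (deriv u) s := by
    intro s
    have h : V s / deriv (deriv u) s = H2 := by
      rw [hH2Q]; exact hQconst s
    rw [div_eq_iff (hu'' s)] at h
    linarith [h]
  -- P = H2 * u' - (φ ∘ u)' has zero derivative
  set P : ℝ → ℝ := fun s => H2 * deriv u s - deriv φ (u s) * deriv u s with hPdef
  have HP : ∀ s, HasDerivAt P 0 s := by
    intro s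
    have h := ((Hu1 s).const_mul H2).sub ((Hφ1u s).mul (Hu1 s))
    have e : H2 * deriv (deriv u) s
        - (deriv (deriv φ) (u s) * deriv u s * deriv u s
            + deriv φ (u s) * deriv (deriv u) s) = 0 := by
      have h2 := hVeq s
      simp only [hVdef] at h2
      linear_combination -h2
    rw [e] at h
    exact h
  have hPconst : ∀ s, P s = P 0 :=
    fun s => is_const_of_deriv_eq_zero (fun r => (HP r).differentiableAt)
      (fun r => (HP r).deriv) s 0
  have hPeq : ∀ s, deriv φ (u s) * deriv u s = H2 * deriv u s - H1 := by
    intro s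
    have h := hPconst s
    simp only [hPdef] at h
    rw [hH1]
    linarith
  -- R = φ ∘ u + H1 * s - H2 * u has zero derivative
  set R : ℝ → ℝ := fun s => φ (u s) + H1 * s - H2 * u s with hRdef
  have HR : ∀ s, HasDerivAt R 0 s := by
    intro s
    have h := ((Hφu s).add ((hasDerivAt_id s).const_mul H1)).sub ((Hu s).const_mul H2)
    have e : deriv φ (u s) * deriv u s + H1 * 1 - H2 * deriv u s = 0 := by
      have := hPeq s; linarith
    rw [e] at h
    exact h
  have hRconst : ∀ s, R s = R 0 :=
    fun s => is_const_of_deriv_eq_zero (fun r => (HR r).differentiableAt)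
      (fun r => (HR r).deriv) s 0
  intro s
  have h := hRconst s
  simp only [hRdef, mul_zero] at h
  rw [hH3]
  linarith

/-- coefficient `H₂` -/
def H2aux (f : ℝ → ℝ → ℝ → ℝ → ℝ) (x t t1 t2 : ℝ) : ℝ :=
  (p4 (p4 f) x t1 t2 (f x t t1 0) * (p4 f x t t1 0) ^ 2
    + p4 f x t1 t2 (f x t t1 0) * p4 (p4 f) x t t1 0) / p4 (p4 f) x t t1 0

/-- coefficient `H₁` -/
def H1aux (f : ℝ → ℝ → ℝ → ℝ → ℝ) (x t t1 t2 : ℝ) : ℝ :=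
  H2aux f x t t1 t2 * p4 f x t t1 0 - p4 f x t1 t2 (f x t t1 0) * p4 f x t t1 0

/-- coefficient `H₃` -/
def H3aux (f : ℝ → ℝ → ℝ → ℝ → ℝ) (x t t1 t2 : ℝ) : ℝ :=
  f x t1 t2 (f x t t1 0) - H2aux f x t t1 t2 * f x t t1 0

/-- Lemma 2: under condition (5), `Df = −H₁·t_x + H₂·f + H₃` with
`H₁, H₂, H₃` depending only on `(x,t,t₁,t₂)`. -/
theorem shifted_f_affine (f : ℝ → ℝ → ℝ → ℝ → ℝ)
    (hf : ContDiff ℝ (⊤ : ℕ∞) (fun p : ℝ × ℝ × ℝ × ℝ => f p.1 p.2.1 p.2.2.1 p.2.2.2))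
    (hftx : ∀ x t t1 tx, p4 f x t t1 tx ≠ 0)
    (hftxtx : ∀ x t t1 tx, p4 (p4 f) x t t1 tx ≠ 0)
    (hcond : ∀ x t t1 t2 tx,
      p4 (p4 (p4 f)) x t1 t2 (f x t t1 tx) / p4 (p4 f) x t1 t2 (f x t t1 tx)
        = (p4 (p4 (p4 f)) x t t1 tx * p4 f x t t1 tx - 3 * (p4 (p4 f) x t t1 tx) ^ 2)
          / (p4 (p4 f) x t t1 tx * (p4 f x t t1 tx) ^ 2)) :
    ∃ H1 H2 H3 : ℝ → ℝ → ℝ → ℝ → ℝ,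
      ContDiff ℝ (⊤ : ℕ∞) (fun p : ℝ × ℝ × ℝ × ℝ => H1 p.1 p.2.1 p.2.2.1 p.2.2.2) ∧
      ContDiff ℝ (⊤ : ℕ∞) (fun p : ℝ × ℝ × ℝ × ℝ => H2 p.1 p.2.1 p.2.2.1 p.2.2.2) ∧
      ContDiff ℝ (⊤ : ℕ∞) (fun p : ℝ × ℝ × ℝ × ℝ => H3 p.1 p.2.1 p.2.2.1 p.2.2.2) ∧
      ∀ x t t1 t2 tx,
        f x t1 t2 (f x t t1 tx)
          = -H1 x t t1 t2 * tx + H2 x t t1 t2 * f x t t1 tx + H3 x t t1 t2 := by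
  have hP1 := p4_contDiff f hf
  have hP2 := p4_contDiff (p4 f) hP1
  have hx : ContDiff ℝ (⊤ : ℕ∞) (fun p : ℝ × ℝ × ℝ × ℝ => p.1) := contDiff_fst
  have ht : ContDiff ℝ (⊤ : ℕ∞) (fun p : ℝ × ℝ × ℝ × ℝ => p.2.1) :=
    contDiff_fst.comp contDiff_snd
  have ht1 : ContDiff ℝ (⊤ : ℕ∞) (fun p : ℝ × ℝ × ℝ × ℝ => p.2.2.1) :=
    contDiff_fst.comp (contDiff_snd.comp contDiff_snd)
  have ht2 : ContDiff ℝ (⊤ : ℕ∞) (fun p : ℝ × ℝ × ℝ × ℝ => p.2.2.2) :=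
    contDiff_snd.comp (contDiff_snd.comp contDiff_snd)
  have hτ : ContDiff ℝ (⊤ : ℕ∞) (fun p : ℝ × ℝ × ℝ × ℝ =>
      ((p.1, p.2.1, p.2.2.1, (0 : ℝ)) : ℝ × ℝ × ℝ × ℝ)) :=
    hx.prodMk (ht.prodMk (ht1.prodMk contDiff_const))
  have hfτ : ContDiff ℝ (⊤ : ℕ∞) (fun p : ℝ × ℝ × ℝ × ℝ => f p.1 p.2.1 p.2.2.1 0) :=
    hf.comp hτ
  have hσ : ContDiff ℝ (⊤ : ℕ∞) (fun p : ℝ × ℝ × ℝ × ℝ =>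
      ((p.1, p.2.2.1, p.2.2.2, f p.1 p.2.1 p.2.2.1 0) : ℝ × ℝ × ℝ × ℝ)) :=
    hx.prodMk (ht1.prodMk (ht2.prodMk hfτ))
  have hA : ContDiff ℝ (⊤ : ℕ∞) (fun p : ℝ × ℝ × ℝ × ℝ =>
      p4 (p4 f) p.1 p.2.2.1 p.2.2.2 (f p.1 p.2.1 p.2.2.1 0)) := hP2.comp hσ
  have hB : ContDiff ℝ (⊤ : ℕ∞) (fun p : ℝ × ℝ × ℝ × ℝ =>
      p4 f p.1 p.2.1 p.2.2.1 0) := hP1.comp hτ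
  have hC : ContDiff ℝ (⊤ : ℕ∞) (fun p : ℝ × ℝ × ℝ × ℝ =>
      p4 f p.1 p.2.2.1 p.2.2.2 (f p.1 p.2.1 p.2.2.1 0)) := hP1.comp hσ
  have hD : ContDiff ℝ (⊤ : ℕ∞) (fun p : ℝ × ℝ × ℝ × ℝ =>
      p4 (p4 f) p.1 p.2.1 p.2.2.1 0) := hP2.comp hτ
  have hfσ : ContDiff ℝ (⊤ : ℕ∞) (fun p : ℝ × ℝ × ℝ × ℝ =>
      f p.1 p.2.2.1 p.2.2.2 (f p.1 p.2.1 p.2.2.1 0)) := hf.comp hσ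
  have hDne : ∀ p : ℝ × ℝ × ℝ × ℝ, p4 (p4 f) p.1 p.2.1 p.2.2.1 0 ≠ 0 :=
    fun p => hftxtx p.1 p.2.1 p.2.2.1 0
  have hH2smooth : ContDiff ℝ (⊤ : ℕ∞)
      (fun p : ℝ × ℝ × ℝ × ℝ => H2aux f p.1 p.2.1 p.2.2.1 p.2.2.2) :=
    ((hA.mul (hB.pow 2)).add (hC.mul hD)).div hD hDne
  refine ⟨H1aux f, H2aux f, H3aux f, ?_, hH2smooth, ?_, ?_⟩
  · exact (hH2smooth.mul hB).sub (hC.mul hB)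
  · exact hfσ.sub (hH2smooth.mul hfτ)
  intro x t t1 t2 tx
  have hu : ContDiff ℝ (⊤ : ℕ∞) (fun s => f x t t1 s) :=
    hf.comp (contDiff_const.prodMk (contDiff_const.prodMk (contDiff_const.prodMk contDiff_id)))
  have hφ : ContDiff ℝ (⊤ : ℕ∞) (fun s => f x t1 t2 s) :=
    hf.comp (contDiff_const.prodMk (contDiff_const.prodMk (contDiff_const.prodMk contDiff_id)))
  exact key (fun s => f x t t1 s) (fun s => f x t1 t2 s) hu hφ
    (fun s => hftx x t t1 s) (fun s => hftxtx x t t1 s)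
    (fun s => hftxtx x t1 t2 (f x t t1 s)) (fun s => hcond x t t1 t2 s)
    (H1aux f x t t1 t2) (H2aux f x t t1 t2) (H3aux f x t t1 t2)
    rfl rfl rfl tx
end
end

section
/- Let f(x,t,t_1,t_x) be smooth with f_{t_x} ≠ 0 and f_{t_x t_x} ≠ 0, let X = ∂/∂t_x, and suppose the function Q := f_{t_x}³ · (D f_{t_x t_x})/f_{t_x t_x} satisfies X(Q) = 0 (where D is the shift (t,t_1,t_x) ↦ (t_1,t_2,f)). Then there exists a function H_2(x,t,t_1,t_2) such that D f_{t_x} = −Q/f_{t_x} + H_2, i.e., f_{t_x}(x,t_1,t_2,f(x,t,t_1,t_x)) + Q(x,t,t_1,t_2)/f_{t_x}(x,t,t_1,t_x) does not depend on t_x. -/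
noncomputable section

lemma slice_contDiff {f : ℝ → ℝ → ℝ → ℝ → ℝ}
    (hf : ContDiff ℝ (⊤ : ℕ∞) (fun p : ℝ × ℝ × ℝ × ℝ => f p.1 p.2.1 p.2.2.1 p.2.2.2))
    (a b c : ℝ) : ContDiff ℝ (⊤ : ℕ∞) (fun s => f a b c s) :=
  show ContDiff ℝ (⊤ : ℕ∞) ((fun p : ℝ × ℝ × ℝ × ℝ => f p.1 p.2.1 p.2.2.1 p.2.2.2) ∘ fun s : ℝ => (a, b, c, s)) from
  hf.comp (ContDiff.prodMk contDiff_const (ContDiff.prodMk contDiff_const (ContDiff.prodMk contDiff_const contDiff_id)))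

/-- if `Q = f_{t_x}³·(D f_{t_x t_x})/f_{t_x t_x}` satisfies `X(Q) = 0`, then
`D f_{t_x} = −Q/f_{t_x} + H₂(x,t,t₁,t₂)` for some `H₂`. -/
theorem Dftx_form (f : ℝ → ℝ → ℝ → ℝ → ℝ)
    (hf : ContDiff ℝ (⊤ : ℕ∞) (fun p : ℝ × ℝ × ℝ × ℝ => f p.1 p.2.1 p.2.2.1 p.2.2.2))
    (hftx : ∀ x t t1 tx, p4 f x t t1 tx ≠ 0)
    (hftxtx : ∀ x t t1 tx, p4 (p4 f) x t t1 tx ≠ 0)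
    (Q : ℝ → ℝ → ℝ → ℝ → ℝ → ℝ)
    (hQdef : ∀ x t t1 t2 tx,
      Q x t t1 t2 tx
        = (p4 f x t t1 tx) ^ 3 * p4 (p4 f) x t1 t2 (f x t t1 tx) / p4 (p4 f) x t t1 tx)
    (hXQ : ∀ x t t1 t2 tx, deriv (fun s => Q x t t1 t2 s) tx = 0) :
    ∃ H2 : ℝ → ℝ → ℝ → ℝ → ℝ,
      ∀ x t t1 t2 tx,
        p4 f x t1 t2 (f x t t1 tx) = -Q x t t1 t2 tx / p4 f x t t1 tx + H2 x t t1 t2 := by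
  refine ⟨fun x t t1 t2 =>
      p4 f x t1 t2 (f x t t1 0) + Q x t t1 t2 0 / p4 f x t t1 0, ?_⟩
  intro x t t1 t2 tx
  set g : ℝ → ℝ := fun s => f x t t1 s with hgdef
  set h : ℝ → ℝ := fun s => f x t1 t2 s with hhdef
  have hgc : ContDiff ℝ (⊤ : ℕ∞) g := (slice_contDiff hf x t t1).of_le (by simp)
  have hg1 : ContDiff ℝ (⊤ : ℕ∞) (deriv g) := (contDiff_infty_iff_deriv.mp hgc).2
  have hg2 : ContDiff ℝ (⊤ : ℕ∞) (deriv (deriv g)) := (contDiff_infty_iff_deriv.mp hg1).2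
  have hhc : ContDiff ℝ (⊤ : ℕ∞) h := (slice_contDiff hf x t1 t2).of_le (by simp)
  have hh1 : ContDiff ℝ (⊤ : ℕ∞) (deriv h) := (contDiff_infty_iff_deriv.mp hhc).2
  have hh2 : ContDiff ℝ (⊤ : ℕ∞) (deriv (deriv h)) := (contDiff_infty_iff_deriv.mp hh1).2
  -- identifications
  have e1 : ∀ s, p4 f x t t1 s = deriv g s := fun s => rfl
  have e2 : ∀ s, p4 (p4 f) x t t1 s = deriv (deriv g) s := fun s => rfl
  have e3 : ∀ u, p4 f x t1 t2 u = deriv h u := fun u => rfl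
  have e4 : ∀ u, p4 (p4 f) x t1 t2 u = deriv (deriv h) u := fun u => rfl
  have hgne : ∀ s, deriv g s ≠ 0 := fun s => e1 s ▸ hftx x t t1 s
  have hgne2 : ∀ s, deriv (deriv g) s ≠ 0 := fun s => e2 s ▸ hftxtx x t t1 s
  set QQ : ℝ → ℝ := fun s => Q x t t1 t2 s with hQQ
  have hQval : ∀ s, QQ s = (deriv g s) ^ 3 * deriv (deriv h) (g s) / deriv (deriv g) s := by
    intro s
    simpa [e1, e2, e3, e4] using hQdef x t t1 t2 s
  have hQdiff : Differentiable ℝ QQ := by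
    have : Differentiable ℝ (fun s => (deriv g s) ^ 3 * deriv (deriv h) (g s) / deriv (deriv g) s) := by
      apply Differentiable.div
      · exact (((hg1.differentiable (by norm_num)).pow 3).mul
          ((hh2.differentiable (by norm_num)).comp (hgc.differentiable (by norm_num))))
      · exact hg2.differentiable (by norm_num)
      · exact hgne2
    have hfun : QQ = fun s => (deriv g s) ^ 3 * deriv (deriv h) (g s) / deriv (deriv g) s :=
      funext hQval
    rw [hfun]; exact this
  have hQ0 : ∀ s, HasDerivAt QQ 0 s := by
    intro s
    have := (hQdiff s).hasDerivAt
    rwa [show deriv QQ s = 0 from hXQ x t t1 t2 s] at this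
  set F : ℝ → ℝ := fun s => deriv h (g s) + QQ s / deriv g s with hF
  have hFderiv : ∀ s, HasDerivAt F 0 s := by
    intro s
    have h1 : HasDerivAt (fun s => deriv h (g s)) (deriv (deriv h) (g s) * deriv g s) s :=
      ((hh1.differentiable (by norm_num) (g s)).hasDerivAt).comp s
        ((hgc.differentiable (by norm_num) s).hasDerivAt)
    have h2 : HasDerivAt (fun s => QQ s / deriv g s)
        ((0 * deriv g s - QQ s * deriv (deriv g) s) / (deriv g s) ^ 2) s :=
      (hQ0 s).div ((hg1.differentiable (by norm_num) s).hasDerivAt) (hgne s)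
    have := h1.add h2
    have hval : deriv (deriv h) (g s) * deriv g s
        + (0 * deriv g s - QQ s * deriv (deriv g) s) / (deriv g s) ^ 2 = 0 := by
      rw [hQval s]
      field_simp [hgne s, hgne2 s]
      ring
    rwa [hval] at this
  have hconst : ∀ s, F s = F 0 := by
    intro s
    exact is_const_of_deriv_eq_zero (fun u => (hFderiv u).differentiableAt)
      (fun u => (hFderiv u).deriv) s 0
  have := hconst tx
  simp only [hF] at this
  rw [e3, e1, neg_div]
  have hH : (fun x t t1 t2 =>
      p4 f x t1 t2 (f x t t1 0) + Q x t t1 t2 0 / p4 f x t t1 0) x t t1 t2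
      = deriv h (g 0) + QQ 0 / deriv g 0 := by
    simp [e1, e3]
    rfl
  rw [hH]
  linarith [this]
end
end

section
/- Let f(t,t_1,t_x) = t_x + e^{(t+t_1)/2}, g(t_{-1},t,t_x) = t_x − e^{(t_{-1}+t)/2}, and on coordinates (t,t_1,t_{-1},t_x) set K = t_x ∂_t + f ∂_{t_1} + g ∂_{t_{-1}}, X = ∂_{t_x}, C_1 = [X,K], Z_1 = [K,C_1], Z_2 = [K,Z_1]. Then there exists a smooth function α(t,t_1,t_{-1},t_x) with Z_2 = α Z_1, so that span{X, K, C_1, Z_1} is closed under bracketing with K among these elements. -/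
noncomputable section

/-- Phase space with coordinates `(t, t₁, t₋₁, t_x)`. -/
abbrev E4 : Type := ℝ × ℝ × ℝ × ℝ

/-- Lie bracket of vector fields on a vector space: `[V,W](p) = W'(p)(V p) − V'(p)(W p)`. -/
def br (V W : E4 → E4) : E4 → E4 := fun p => fderiv ℝ W p (V p) - fderiv ℝ V p (W p)

namespace AS

open Real ContinuousLinearMap

def l1 : E4 →L[ℝ] ℝ := fst ℝ ℝ (ℝ×ℝ×ℝ)
def l2 : E4 →L[ℝ] ℝ := (fst ℝ ℝ (ℝ×ℝ)).comp (snd ℝ ℝ (ℝ×ℝ×ℝ))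
def l3 : E4 →L[ℝ] ℝ := (fst ℝ ℝ ℝ).comp ((snd ℝ ℝ (ℝ×ℝ)).comp (snd ℝ ℝ (ℝ×ℝ×ℝ)))
def l4 : E4 →L[ℝ] ℝ := (snd ℝ ℝ ℝ).comp ((snd ℝ ℝ (ℝ×ℝ)).comp (snd ℝ ℝ (ℝ×ℝ×ℝ)))

@[simp] lemma l1_apply (p : E4) : l1 p = p.1 := rfl
@[simp] lemma l2_apply (p : E4) : l2 p = p.2.1 := rfl
@[simp] lemma l3_apply (p : E4) : l3 p = p.2.2.1 := rfl
@[simp] lemma l4_apply (p : E4) : l4 p = p.2.2.2 := rfl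

def Kf : E4 → E4 := fun p => (p.2.2.2, p.2.2.2 + Real.exp ((p.1 + p.2.1) / 2),
      p.2.2.2 - Real.exp ((p.2.2.1 + p.1) / 2), 0)

def a (p : E4) : ℝ := (p.1 + p.2.1) / 2
def b (p : E4) : ℝ := (p.2.2.1 + p.1) / 2

lemma ha (p : E4) : HasFDerivAt (fun q : E4 => (q.1 + q.2.1) / 2)
    (((2:ℝ)⁻¹ • (l1 + l2)) : E4 →L[ℝ] ℝ) p := by
  have he : (fun q : E4 => (q.1 + q.2.1) / 2) = ⇑(((2:ℝ)⁻¹ • (l1 + l2)) : E4 →L[ℝ] ℝ) := by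
    funext q; simp [div_eq_inv_mul, mul_add]
  rw [he]
  exact ContinuousLinearMap.hasFDerivAt _

lemma hb (p : E4) : HasFDerivAt (fun q : E4 => (q.2.2.1 + q.1) / 2)
    (((2:ℝ)⁻¹ • (l3 + l1)) : E4 →L[ℝ] ℝ) p := by
  have he : (fun q : E4 => (q.2.2.1 + q.1) / 2) = ⇑(((2:ℝ)⁻¹ • (l3 + l1)) : E4 →L[ℝ] ℝ) := by
    funext q; simp [div_eq_inv_mul, mul_add]
  rw [he]
  exact ContinuousLinearMap.hasFDerivAt _

def Kd (p : E4) : E4 →L[ℝ] E4 :=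
  l4.prod ((l4 + Real.exp (a p) • ((2:ℝ)⁻¹ • (l1 + l2))).prod
    ((l4 - Real.exp (b p) • ((2:ℝ)⁻¹ • (l3 + l1))).prod 0))

lemma hasK (p : E4) : HasFDerivAt Kf (Kd p) p := by
  have h4 : HasFDerivAt (fun q : E4 => q.2.2.2) (l4 : E4 →L[ℝ] ℝ) p := l4.hasFDerivAt
  exact HasFDerivAt.prodMk h4 (HasFDerivAt.prodMk (h4.add ((ha p).exp)) (HasFDerivAt.prodMk (h4.sub ((hb p).exp)) (hasFDerivAt_const 0 p)))

def Z1f : E4 → E4 := fun p => (0, -Real.exp ((p.1 + p.2.1) / 2), Real.exp ((p.2.2.1 + p.1) / 2), 0)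

def Zd (p : E4) : E4 →L[ℝ] E4 :=
  (0 : E4 →L[ℝ] ℝ).prod ((-(Real.exp (a p) • ((2:ℝ)⁻¹ • (l1 + l2)))).prod
    ((Real.exp (b p) • ((2:ℝ)⁻¹ • (l3 + l1))).prod 0))

lemma hasZ1 (p : E4) : HasFDerivAt Z1f (Zd p) p :=
  HasFDerivAt.prodMk (hasFDerivAt_const 0 p) (HasFDerivAt.prodMk (((ha p).exp).neg) (HasFDerivAt.prodMk ((hb p).exp) (hasFDerivAt_const 0 p)))

end AS

open AS in
/-- for the Adler–Startsev chain, with `C₁ = [X,K]`, `Z₁ = [K,C₁]`,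
`Z₂ = [K,Z₁]`, there is a smooth function `α` with `Z₂ = α·Z₁`. -/
theorem AdlerStartsev_Z2_proportional (K X : E4 → E4)
    (hK : K = fun p => (p.2.2.2, p.2.2.2 + Real.exp ((p.1 + p.2.1) / 2),
      p.2.2.2 - Real.exp ((p.2.2.1 + p.1) / 2), 0))
    (hX : X = fun _ => ((0 : ℝ), (0 : ℝ), (0 : ℝ), (1 : ℝ))) :
    ∃ α : E4 → ℝ, ContDiff ℝ (⊤ : ℕ∞) α ∧
      ∀ p : E4, br K (br K (br X K)) p = α p • br K (br X K) p := by
  have hKf : K = Kf := hK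
  have hC1 : br X K = fun _ => ((1:ℝ), (1:ℝ), (1:ℝ), (0:ℝ)) := by
    funext p
    rw [br, hKf, hX]
    simp only [(hasK p).fderiv, fderiv_const, Pi.zero_apply,
      ContinuousLinearMap.zero_apply, sub_zero]
    simp [Kd, a, b]
  have hZ1 : br K (br X K) = Z1f := by
    funext p
    rw [hC1, br, hKf]
    simp only [(hasK p).fderiv, fderiv_const, Pi.zero_apply,
      ContinuousLinearMap.zero_apply, zero_sub]
    simp [Kd, Z1f, a, b]
    ring_nf
    constructor <;> trivial
  refine ⟨fun p => p.2.2.2, by fun_prop, fun p => ?_⟩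
  rw [hZ1, br, hKf]
  simp only [(hasK p).fderiv, (hasZ1 p).fderiv]
  simp [Kd, Zd, Kf, Z1f, a, b, Prod.smul_mk, smul_eq_mul, Prod.ext_iff, sub_eq_iff_eq_add]
  constructor <;> ring
end
end
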